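/- Let K be a CRG all of whose vertices are white and all of whose edges are black or gray. Suppose v and v' are vertices of K joined by a gray edge such that at least three vertices of K are joined to both v and v' by gray edges. Then H9 embeds in K. -/

import Mathlib

/-- Colors for edges of a colored regularity graph. -/
inductive EColor : Type
  | white
  | gray
  | black
deriving DecidableEq

/-- A colored regularity graph (CRG) on a finite vertex type `V`: each vertex is
white or black (`vWhite v = true` means white), and each pair of distinct vertices
gets a symmetric edge color (white, gray or black). -/
structure CRG (V : Type) [Fintype V] where
  vWhite : V → Bool
  ecolor : V → V → EColor
  ecolor_symm : ∀ u v, ecolor u v = ecolor v u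

namespace CRG

variable {V : Type} [Fintype V] [DecidableEq V]

/-- The matrix `M_K(p)`. -/
noncomputable def M (K : CRG V) (p : ℝ) (u v : V) : ℝ :=
  if u = v then (if K.vWhite u then p else 1 - p)
  else
    match K.ecolor u v with
    | EColor.white => p
    | EColor.black => 1 - p
    | EColor.gray => 0

/-- The function `g_K(p)`: the minimum of `xᵀ M_K(p) x` over nonnegative weight
vectors summing to `1`. -/
noncomputable def g (K : CRG V) (p : ℝ) : ℝ :=
  sInf {r : ℝ | ∃ x : V → ℝ, (∀ v, 0 ≤ x v) ∧ (∑ v, x v) = 1 ∧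
    r = ∑ u, ∑ v, x u * K.M p u v * x v}

/-- The sub-CRG induced on a subset `s` of the vertices. -/
def sub (K : CRG V) (s : Finset V) : CRG {v // v ∈ s} where
  vWhite := fun v => K.vWhite v.1
  ecolor := fun u v => K.ecolor u.1 v.1
  ecolor_symm := fun u v => K.ecolor_symm u.1 v.1

/-- `K` is `p`-core if `g_K(p) < g_{K'}(p)` for every proper (nonempty) sub-CRG `K'`. -/
def IsPCore (K : CRG V) (p : ℝ) : Prop :=
  ∀ s : Finset V, s.Nonempty → s ≠ Finset.univ → K.g p < (K.sub s).g p

/-- `x` is an optimal weight vector for `K` at `p`. -/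
def IsOptWeight (K : CRG V) (p : ℝ) (x : V → ℝ) : Prop :=
  (∀ v, 0 ≤ x v) ∧ (∑ v, x v) = 1 ∧
    (∑ u, ∑ v, x u * K.M p u v * x v) = K.g p

/-- The gray degree `d_G(v)`: total weight of gray neighbors of `v`. -/
noncomputable def dG (K : CRG V) (x : V → ℝ) (v : V) : ℝ :=
  ∑ w ∈ Finset.univ.filter fun w => w ≠ v ∧ K.ecolor v w = EColor.gray, x w

/-- The white degree `d_W(v)`: total weight of white neighbors of `v`, including `v`
itself if `v` is white. -/
noncomputable def dW (K : CRG V) (x : V → ℝ) (v : V) : ℝ :=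
  (∑ w ∈ Finset.univ.filter fun w => w ≠ v ∧ K.ecolor v w = EColor.white, x w) +
    (if K.vWhite v then x v else 0)

/-- The black degree `d_B(v)`: total weight of black neighbors of `v`, including `v`
itself if `v` is black. -/
noncomputable def dB (K : CRG V) (x : V → ℝ) (v : V) : ℝ :=
  (∑ w ∈ Finset.univ.filter fun w => w ≠ v ∧ K.ecolor v w = EColor.black, x w) +
    (if K.vWhite v then 0 else x v)

/-- The number of gray neighbors of `v`. -/
def grayDeg (K : CRG V) (v : V) : ℕ :=
  (Finset.univ.filter fun w => w ≠ v ∧ K.ecolor v w = EColor.gray).card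

end CRG

/-- A graph `H` embeds in a CRG `K`, written `H ↦ K`. -/
def EmbedsIn {α : Type*} {V : Type} [Fintype V] (H : SimpleGraph α) (K : CRG V) : Prop :=
  ∃ φ : α → V,
    (∀ a b : α, H.Adj a b →
      (φ a = φ b ∧ K.vWhite (φ a) = false) ∨
      (φ a ≠ φ b ∧ (K.ecolor (φ a) (φ b) = EColor.black ∨ K.ecolor (φ a) (φ b) = EColor.gray))) ∧
    (∀ a b : α, a ≠ b → ¬H.Adj a b →
      (φ a = φ b ∧ K.vWhite (φ a) = true) ∨
      (φ a ≠ φ b ∧ (K.ecolor (φ a) (φ b) = EColor.white ∨ K.ecolor (φ a) (φ b) = EColor.gray)))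

/-- The graph `H₉`: vertices `ℤ₉`, distinct `i,j` adjacent iff `i - j ≡ ±1, ±2 (mod 9)`
or `{i,j} ⊆ {0,3,6}`. -/
def H9 : SimpleGraph (ZMod 9) :=
  SimpleGraph.fromRel (fun i j =>
    i - j = 1 ∨ i - j = 2 ∨ (i ∈ ({0, 3, 6} : Set (ZMod 9)) ∧ j ∈ ({0, 3, 6} : Set (ZMod 9))))

/-!
The vertices `0, 3, 6` of `H₉` form a triangle, `{1, 4, 7}` and `{2, 5, 8}` are independent sets,
and every non-edge of `H₉` meets one of these two sets. Hence `H₉` embeds in the five-vertex CRG in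
which two white hubs, joined by a gray edge, are joined by gray edges to a black triangle: each
independent set goes to a hub. Sending the hubs to `v, v'` and the triangle to three common gray
neighbours maps this CRG injectively into `K` and can only turn its black edges gray, which
preserves embeddings.
-/

open Function

theorem EmbedsIn.of_injective {α W V : Type} [Fintype W] [Fintype V] {H : SimpleGraph α}
    {K₀ : CRG W} {K : CRG V} (h : EmbedsIn H K₀) (ψ : W → V) (hψ : Injective ψ)
    (hvert : ∀ x, K.vWhite (ψ x) = K₀.vWhite x)
    (hedge : ∀ x y, x ≠ y →
      K.ecolor (ψ x) (ψ y) = K₀.ecolor x y ∨ K.ecolor (ψ x) (ψ y) = EColor.gray) :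
    EmbedsIn H K := by
  have transfer : ∀ {x y}, x ≠ y → ∀ c, K₀.ecolor x y = c ∨ K₀.ecolor x y = EColor.gray →
      K.ecolor (ψ x) (ψ y) = c ∨ K.ecolor (ψ x) (ψ y) = EColor.gray := by
    intro x y hxy c hc
    rcases hedge x y hxy with h | h
    · rwa [h]
    · exact .inr h
  obtain ⟨φ, hadj, hnadj⟩ := h
  refine ⟨ψ ∘ φ, fun a b hab => ?_, fun a b hab hnab => ?_⟩
  · rcases hadj a b hab with ⟨heq, hb⟩ | ⟨hne, hc⟩
    · exact .inl ⟨congrArg ψ heq, (hvert _).trans hb⟩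
    · exact .inr ⟨hψ.ne hne, transfer hne _ hc⟩
  · rcases hnadj a b hab hnab with ⟨heq, hb⟩ | ⟨hne, hc⟩
    · exact .inl ⟨congrArg ψ heq, (hvert _).trans hb⟩
    · exact .inr ⟨hψ.ne hne, transfer hne _ hc⟩

namespace CRG

def grayEdgeJoinBlackTriangle : CRG (Fin 5) where
  vWhite _ := true
  ecolor x y := if x < 2 ∨ y < 2 then EColor.gray else EColor.black
  ecolor_symm x y := by simp only [or_comm]

theorem embedsIn_of_grayEdgeJoinBlackTriangle {V α : Type} [Fintype V] {H : SimpleGraph α}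
    (K : CRG V) (hwhite : ∀ v, K.vWhite v = true)
    (hedges : ∀ u v, u ≠ v → K.ecolor u v ≠ EColor.white)
    {v v' : V} (hne : v ≠ v') (hgray : K.ecolor v v' = EColor.gray) (w : Fin 3 ↪ V)
    (hw : ∀ i, w i ≠ v ∧ w i ≠ v' ∧ K.ecolor v (w i) = EColor.gray ∧
      K.ecolor v' (w i) = EColor.gray)
    (h : EmbedsIn H grayEdgeJoinBlackTriangle) : EmbedsIn H K := by
  have hv : ∀ i, w i ≠ v := fun i => (hw i).1
  have hv' : ∀ i, w i ≠ v' := fun i => (hw i).2.1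
  have hvw : ∀ i, K.ecolor v (w i) = EColor.gray := fun i => (hw i).2.2.1
  have hv'w : ∀ i, K.ecolor v' (w i) = EColor.gray := fun i => (hw i).2.2.2
  have hψ : Injective ![v, v', w 0, w 1, w 2] := by
    intro x y hxy
    fin_cases x <;> fin_cases y <;> simp_all [Ne.symm hne, eq_comm (a := v), eq_comm (a := v')]
  refine h.of_injective _ hψ (fun x => hwhite _) fun x y hxy => ?_
  simp only [grayEdgeJoinBlackTriangle]
  split_ifs with hhub
  · have hgray' : K.ecolor v' v = EColor.gray := K.ecolor_symm v v' ▸ hgray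
    have hwv : ∀ i, K.ecolor (w i) v = EColor.gray := fun i => K.ecolor_symm v _ ▸ hvw i
    have hwv' : ∀ i, K.ecolor (w i) v' = EColor.gray := fun i => K.ecolor_symm v' _ ▸ hv'w i
    right
    fin_cases x <;> fin_cases y <;> simp_all
  · cases hc : K.ecolor _ _
    · exact absurd hc (hedges _ _ (hψ.ne hxy))
    all_goals simp

end CRG

instance : DecidableRel H9.Adj := fun a b => by
  unfold H9; infer_instance

def H9.vertexClass : ZMod 9 → Fin 5 := ![2, 0, 1, 3, 0, 1, 4, 0, 1]

theorem H9_embedsIn_grayEdgeJoinBlackTriangle : EmbedsIn H9 CRG.grayEdgeJoinBlackTriangle :=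
  ⟨H9.vertexClass, by decide, by decide⟩

theorem H9_embeds_of_three_common_gray {V : Type} [Fintype V] [DecidableEq V]
    (K : CRG V)
    (hwhite : ∀ v : V, K.vWhite v = true)
    (hedges : ∀ u v : V, u ≠ v → K.ecolor u v ≠ EColor.white)
    (v v' : V) (hne : v ≠ v') (hgray : K.ecolor v v' = EColor.gray)
    (hcommon : 3 ≤ (Finset.univ.filter fun w =>
      w ≠ v ∧ w ≠ v' ∧ K.ecolor v w = EColor.gray ∧ K.ecolor v' w = EColor.gray).card) :
    EmbedsIn H9 K := by
  set S := Finset.univ.filter fun w =>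
    w ≠ v ∧ w ≠ v' ∧ K.ecolor v w = EColor.gray ∧ K.ecolor v' w = EColor.gray
  obtain ⟨w⟩ : Nonempty (Fin 3 ↪ S) :=
    Function.Embedding.nonempty_of_card_le (by rwa [Fintype.card_fin, Fintype.card_coe])
  exact K.embedsIn_of_grayEdgeJoinBlackTriangle hwhite hedges hne hgray (w.trans (.subtype _))
    (fun i => (Finset.mem_filter.mp (w i).2).2) H9_embedsIn_grayEdgeJoinBlackTriangle
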